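/- Let (n,k,r) be an admissible triple of parameters with n > k. Then the r-Lah distribution puts equal mass on even and on odd values: Σ_{j ∈ {k,...,n}, j even} ⌈n,j⌉_r·⦃j,k⦄_r = Σ_{j ∈ {k,...,n}, j odd} ⌈n,j⌉_r·⦃j,k⦄_r = L(n,k)_r / 2; equivalently, P[Lah(n,k)_r is even] = P[Lah(n,k)_r is odd] = 1/2. -/

import Mathlib

open Finset Filter MeasureTheory

/-- r-Stirling numbers of the first kind. -/
noncomputable def stirFir (r : ℝ) : ℕ → ℕ → ℝ
  | 0, 0 => 1
  | 0, _ + 1 => 0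
  | n + 1, 0 => ((n : ℝ) + r) * stirFir r n 0
  | n + 1, k + 1 => ((n : ℝ) + r) * stirFir r n (k + 1) + stirFir r n k

/-- r-Stirling numbers of the second kind. -/
noncomputable def stirSec (r : ℝ) : ℕ → ℕ → ℝ
  | 0, 0 => 1
  | 0, _ + 1 => 0
  | n + 1, 0 => r * stirSec r n 0
  | n + 1, k + 1 => ((k : ℝ) + 1 + r) * stirSec r n (k + 1) + stirSec r n k

/-- The r-Lah number L(n,k)_r. -/
noncomputable def lahNum (r : ℝ) (n k : ℕ) : ℝ :=
  ∑ j ∈ Finset.Icc k n, stirFir r n j * stirSec r j k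

/-- The probability mass function of the r-Lah distribution. -/
noncomputable def lahPMF (r : ℝ) (n k j : ℕ) : ℝ :=
  stirFir r n j * stirSec r j k / lahNum r n k

/-- The expectation of the r-Lah distribution. -/
noncomputable def lahExp (r : ℝ) (n k : ℕ) : ℝ :=
  (∑ j ∈ Finset.Icc k n, (j : ℝ) * stirFir r n j * stirSec r j k) / lahNum r n k

/-! Since `L(n,k)_r` is the sum of the weights `⌈n,j⌉_r ⦃j,k⦄_r`, it suffices that their
alternating sum vanishes. Up to the sign `(-1)^n` that sum is the `(n,k)` entry of the product
of the signed first-kind matrix with the second-kind one, and these matrices are inverse to each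
other (orthogonality of the `r`-Stirling numbers, which follows by induction on `n` from the two
recurrences); so the entry vanishes for `k < n`. -/

lemma stirFir_eq_zero_of_lt (r : ℝ) {n k : ℕ} (h : n < k) : stirFir r n k = 0 := by
  induction n generalizing k with
  | zero => obtain ⟨k, rfl⟩ := Nat.exists_eq_succ_of_ne_zero h.ne'; rfl
  | succ n ih =>
    obtain ⟨k, rfl⟩ := Nat.exists_eq_succ_of_ne_zero (by omega : k ≠ 0)
    simp [stirFir, ih (by omega : n < k + 1), ih (by omega : n < k)]

lemma stirSec_eq_zero_of_lt (r : ℝ) {n k : ℕ} (h : n < k) : stirSec r n k = 0 := by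
  induction n generalizing k with
  | zero => obtain ⟨k, rfl⟩ := Nat.exists_eq_succ_of_ne_zero h.ne'; rfl
  | succ n ih =>
    obtain ⟨k, rfl⟩ := Nat.exists_eq_succ_of_ne_zero (by omega : k ≠ 0)
    simp [stirSec, ih (by omega : n < k + 1), ih (by omega : n < k)]

lemma sum_filter_even_sub_sum_filter_odd {R : Type*} [CommRing R] (s : Finset ℕ) (f : ℕ → R) :
    ∑ j ∈ s.filter Even, f j - ∑ j ∈ s.filter Odd, f j = ∑ j ∈ s, (-1) ^ j * f j := by
  rw [← sum_filter_add_sum_filter_not s Even, sub_eq_add_neg, ← sum_neg_distrib]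
  congr 1
  · exact sum_congr rfl fun j hj => by rw [(mem_filter.1 hj).2.neg_one_pow, one_mul]
  · simp only [Nat.not_even_iff_odd]
    exact sum_congr rfl fun j hj => by rw [(mem_filter.1 hj).2.neg_one_pow, neg_one_mul]

lemma sum_filter_even_add_sum_filter_odd {M : Type*} [AddCommMonoid M] (s : Finset ℕ)
    (f : ℕ → M) : ∑ j ∈ s.filter Even, f j + ∑ j ∈ s.filter Odd, f j = ∑ j ∈ s, f j := by
  rw [← sum_filter_add_sum_filter_not s Even]
  simp only [Nat.not_even_iff_odd]

/-- Up to the sign `(-1) ^ n`, the `(n, k)` entry of the product of the matrix of signed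
`r`-Stirling numbers of the first kind with that of the second kind. -/
noncomputable def stirAltSum (r : ℝ) (n k : ℕ) : ℝ :=
  ∑ j ∈ range (n + 1), (-1) ^ j * (stirFir r n j * stirSec r j k)

lemma stirAltSum_succ (r : ℝ) (n k : ℕ) :
    stirAltSum r (n + 1) k = (n + r) * stirAltSum r n k
      - ∑ j ∈ range (n + 1), (-1) ^ j * (stirFir r n j * stirSec r (j + 1) k) := by
  have hpad :
      stirAltSum r n k = ∑ j ∈ range (n + 2), (-1) ^ j * (stirFir r n j * stirSec r j k) := by
    rw [stirAltSum, sum_range_succ _ (n + 1), stirFir_eq_zero_of_lt r n.lt_succ_self]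
    ring
  have hstep :
      ∑ j ∈ range (n + 1), (-1) ^ (j + 1) * (stirFir r (n + 1) (j + 1) * stirSec r (j + 1) k)
        = (n + r) *
            ∑ j ∈ range (n + 1), (-1) ^ (j + 1) * (stirFir r n (j + 1) * stirSec r (j + 1) k)
          - ∑ j ∈ range (n + 1), (-1) ^ j * (stirFir r n j * stirSec r (j + 1) k) := by
    rw [mul_sum, ← sum_sub_distrib]
    exact sum_congr rfl fun j _ => by rw [stirFir]; ring
  rw [hpad, stirAltSum, sum_range_succ', sum_range_succ' _ (n + 1), hstep, stirFir]
  ring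

lemma stirAltSum_succ_zero (r : ℝ) (n : ℕ) : stirAltSum r (n + 1) 0 = n * stirAltSum r n 0 := by
  have h : ∑ j ∈ range (n + 1), (-1) ^ j * (stirFir r n j * stirSec r (j + 1) 0)
      = r * stirAltSum r n 0 := by
    rw [stirAltSum, mul_sum]
    exact sum_congr rfl fun j _ => by rw [stirSec]; ring
  rw [stirAltSum_succ, h]
  ring

lemma stirAltSum_succ_succ (r : ℝ) (n k : ℕ) :
    stirAltSum r (n + 1) (k + 1) = (n - (k + 1)) * stirAltSum r n (k + 1) - stirAltSum r n k := by
  have h : ∑ j ∈ range (n + 1), (-1) ^ j * (stirFir r n j * stirSec r (j + 1) (k + 1))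
      = (k + 1 + r) * stirAltSum r n (k + 1) + stirAltSum r n k := by
    rw [stirAltSum, stirAltSum, mul_sum, ← sum_add_distrib]
    exact sum_congr rfl fun j _ => by rw [stirSec]; ring
  rw [stirAltSum_succ, h]
  ring

theorem stirAltSum_eq (r : ℝ) (n k : ℕ) : stirAltSum r n k = if k = n then (-1) ^ n else 0 := by
  induction n generalizing k with
  | zero =>
    cases k <;> simp [stirAltSum, stirFir, stirSec]
  | succ n ih =>
    cases k with
    | zero =>
      rw [stirAltSum_succ_zero, ih]
      rcases n with _ | n <;> simp
    | succ k =>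
      rw [stirAltSum_succ_succ, ih, ih]
      rcases lt_trichotomy k n with h | rfl | h
      · rw [if_neg h.ne, if_neg (show k + 1 ≠ n + 1 by omega)]
        split_ifs with hkn
        · rw [← hkn]; push_cast; ring
        · ring
      · simp [pow_succ]
      · rw [if_neg (show k + 1 ≠ n by omega), if_neg h.ne', if_neg (show k + 1 ≠ n + 1 by omega)]
        ring

lemma sum_Icc_neg_one_pow_mul_stirFir_mul_stirSec (r : ℝ) (n k : ℕ) :
    ∑ j ∈ Icc k n, (-1) ^ j * (stirFir r n j * stirSec r j k) = stirAltSum r n k := by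
  refine sum_subset (fun j hj => by simp only [mem_Icc, mem_range] at hj ⊢; omega) ?_
  intro j hjn hj
  rw [stirSec_eq_zero_of_lt r (by simp only [mem_Icc, mem_range] at hj hjn; omega)]
  ring

theorem rLah_even_odd_general (n k : ℕ) (r : ℝ) (hkn : k < n) :
    (∑ j ∈ (Finset.Icc k n).filter (fun j => Even j),
        stirFir r n j * stirSec r j k) = lahNum r n k / 2 ∧
    (∑ j ∈ (Finset.Icc k n).filter (fun j => Odd j),
        stirFir r n j * stirSec r j k) = lahNum r n k / 2 := by
  have hsub := sum_filter_even_sub_sum_filter_odd (Icc k n) fun j => stirFir r n j * stirSec r j k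
  have hadd := sum_filter_even_add_sum_filter_odd (Icc k n) fun j => stirFir r n j * stirSec r j k
  rw [sum_Icc_neg_one_pow_mul_stirFir_mul_stirSec, stirAltSum_eq, if_neg hkn.ne] at hsub
  rw [← lahNum] at hadd
  constructor <;> linarith

theorem rLah_even_odd (n k : ℕ) (r : ℝ) (hn : 1 ≤ n) (hk : k ≤ n) (hr : 0 ≤ r)
    (hmax : 0 < k ∨ 0 < r) (hkn : k < n) :
    (∑ j ∈ (Finset.Icc k n).filter (fun j => Even j),
        stirFir r n j * stirSec r j k) = lahNum r n k / 2 ∧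
    (∑ j ∈ (Finset.Icc k n).filter (fun j => Odd j),
        stirFir r n j * stirSec r j k) = lahNum r n k / 2 :=
  rLah_even_odd_general n k r hkn
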